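/- arXiv:2108.03074 — 2 statements merged into one kernel-verified Lean document; each statement's English description precedes it below -/
import Mathlib

section
/- Let H be a real Hilbert space, let a : H × H → ℝ be a bounded, symmetric, coercive bilinear form, let f, g₁, g₂ : H → ℝ be continuous linear functionals, let δ₁, δ₂ ∈ ℝ, and set K = {w ∈ H : g₁(w) ≥ δ₁ and g₂(w) ≥ δ₂}. Assume the Slater condition: there exists ŷ ∈ H with g₂(ŷ) > δ₂ and g₁(ŷ) ≥ δ₁. If y* ∈ K minimizes J(v) = (1/2)·a(v,v) − f(v) over K, then there exist real numbers λ ≥ 0 and μ ≥ 0 such that a(y*, w) = f(w) + λ·g₁(w) + μ·g₂(w) for all w ∈ H, together with the complementarity conditions λ·(g₁(y*) − δ₁) = 0 and μ·(g₂(y*) − δ₂) = 0. -/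
/-- One-constraint Farkas: if a linear functional `L` is nonnegative on the
half-space `{d : 0 ≤ g d}`, then `L = lam • g` for some `lam ≥ 0`. -/
private lemma farkas_one {H : Type*} [AddCommGroup H] [Module ℝ H]
    (L g : H →ₗ[ℝ] ℝ) (h : ∀ d, 0 ≤ g d → 0 ≤ L d) :
    ∃ lam : ℝ, 0 ≤ lam ∧ ∀ w, L w = lam * g w := by
  by_cases h0 : ∀ w, g w = 0
  · refine ⟨0, le_refl 0, fun w => ?_⟩
    have h1 := h w (by rw [h0 w])
    have h2 := h (-w) (by rw [map_neg, h0 w, neg_zero])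
    rw [map_neg] at h2
    simp only [zero_mul]
    linarith
  · push_neg at h0
    obtain ⟨u₀, hu₀⟩ := h0
    set u : H := (g u₀)⁻¹ • u₀ with hu
    have hgu : g u = 1 := by
      rw [hu, map_smul, smul_eq_mul, inv_mul_cancel₀ hu₀]
    refine ⟨L u, h u (by rw [hgu]; norm_num), fun w => ?_⟩
    have hz : g (w - g w • u) = 0 := by
      rw [map_sub, map_smul, smul_eq_mul, hgu, mul_one, sub_self]
    have h1 := h _ hz.ge
    have h2 := h (-(w - g w • u)) (by rw [map_neg, hz, neg_zero])
    rw [map_neg] at h2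
    have hz' : L (w - g w • u) = 0 := le_antisymm (by linarith) h1
    rw [map_sub, map_smul, smul_eq_mul] at hz'
    linarith

/-- Two-constraint Farkas under a Slater-type condition. -/
private lemma farkas_two {H : Type*} [AddCommGroup H] [Module ℝ H]
    (L g₁ g₂ : H →ₗ[ℝ] ℝ)
    (h : ∀ d, 0 ≤ g₁ d → 0 ≤ g₂ d → 0 ≤ L d)
    (hs : ∃ d, 0 < g₂ d ∧ 0 ≤ g₁ d) :
    ∃ lam mu : ℝ, 0 ≤ lam ∧ 0 ≤ mu ∧ ∀ w, L w = lam * g₁ w + mu * g₂ w := by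
  obtain ⟨dh, hdh2, hdh1⟩ := hs
  by_cases h0 : ∀ w, g₁ w = 0
  · obtain ⟨mu, hmu, heq⟩ := farkas_one L g₂ (fun d hd => h d (by rw [h0 d]) hd)
    exact ⟨0, mu, le_refl 0, hmu, fun w => by rw [heq w]; ring⟩
  · push_neg at h0
    obtain ⟨u₀, hu₀⟩ := h0
    obtain ⟨u, hgu⟩ : ∃ u, g₁ u = 1 :=
      ⟨(g₁ u₀)⁻¹ • u₀, by rw [map_smul, smul_eq_mul, inv_mul_cancel₀ hu₀]⟩
    by_cases hdep : ∀ w, g₂ w = g₂ u * g₁ w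
    · -- dependent case: g₂ = c • g₁ with c = g₂ u
      have hc : 0 < g₂ u := by
        have hd := hdep dh
        nlinarith
      obtain ⟨lam, hlam, heq⟩ := farkas_one L g₁
        (fun d hd => h d hd (by rw [hdep d]; exact mul_nonneg hc.le hd))
      exact ⟨lam, 0, hlam, le_refl 0, fun w => by rw [heq w]; ring⟩
    · -- independent case: build a dual basis
      push_neg at hdep
      obtain ⟨v', hv'⟩ := hdep
      obtain ⟨e₂, hg1e2, hg2e2⟩ : ∃ e₂, g₁ e₂ = 0 ∧ g₂ e₂ = 1 := by
        have hne : g₂ v' - g₂ u * g₁ v' ≠ 0 := fun hc => hv' (by linarith)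
        refine ⟨(g₂ v' - g₂ u * g₁ v')⁻¹ • (v' - g₁ v' • u), ?_, ?_⟩
        · rw [map_smul, map_sub, map_smul, smul_eq_mul, smul_eq_mul, hgu]
          ring
        · rw [map_smul, map_sub, map_smul, smul_eq_mul, smul_eq_mul,
            show g₂ v' - g₁ v' * g₂ u = g₂ v' - g₂ u * g₁ v' from by ring,
            inv_mul_cancel₀ hne]
      obtain ⟨e₁, hg1e1, hg2e1⟩ : ∃ e₁, g₁ e₁ = 1 ∧ g₂ e₁ = 0 :=
        ⟨u - g₂ u • e₂,
          by rw [map_sub, map_smul, smul_eq_mul, hgu, hg1e2]; ring,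
          by rw [map_sub, map_smul, smul_eq_mul, hg2e2]; ring⟩
      refine ⟨L e₁, L e₂, h e₁ (by rw [hg1e1]; norm_num) (by rw [hg2e1]),
        h e₂ (by rw [hg1e2]) (by rw [hg2e2]; norm_num), fun w => ?_⟩
      have hg1z : g₁ (w - g₁ w • e₁ - g₂ w • e₂) = 0 := by
        rw [map_sub, map_sub, map_smul, map_smul, smul_eq_mul, smul_eq_mul,
          hg1e1, hg1e2]; ring
      have hg2z : g₂ (w - g₁ w • e₁ - g₂ w • e₂) = 0 := by
        rw [map_sub, map_sub, map_smul, map_smul, smul_eq_mul, smul_eq_mul,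
          hg2e1, hg2e2]; ring
      have h1 := h _ hg1z.ge hg2z.ge
      have h2 := h (-(w - g₁ w • e₁ - g₂ w • e₂))
        (by rw [map_neg, hg1z, neg_zero]) (by rw [map_neg, hg2z, neg_zero])
      rw [map_neg] at h2
      have hz0 : L (w - g₁ w • e₁ - g₂ w • e₂) = 0 :=
        le_antisymm (by linarith) h1
      rw [map_sub, map_sub, map_smul, map_smul, smul_eq_mul, smul_eq_mul]
        at hz0
      linarith

/-- Necessity of the Karush–Kuhn–Tucker conditions under a Slater condition:
if `y*` minimizes `J(v) = (1/2)·a(v,v) − f(v)` over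
`K = {w : g₁(w) ≥ δ₁ ∧ g₂(w) ≥ δ₂}` for a bounded, symmetric, coercive bilinear
form `a`, then there exist multipliers `λ, μ ≥ 0` satisfying the stationarity
equation and the complementarity conditions. -/
theorem kkt_necessary_of_minimizer
    {H : Type*} [NormedAddCommGroup H] [InnerProductSpace ℝ H] [CompleteSpace H]
    (a : H →ₗ[ℝ] H →ₗ[ℝ] ℝ)
    (M : ℝ) (hM : 0 ≤ M) (hbdd : ∀ v w : H, |a v w| ≤ M * ‖v‖ * ‖w‖)
    (hsymm : ∀ v w : H, a v w = a w v)
    (α : ℝ) (hα : 0 < α) (hcoer : ∀ v : H, α * ‖v‖ ^ 2 ≤ a v v)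
    (f g₁ g₂ : H →L[ℝ] ℝ) (δ₁ δ₂ : ℝ)
    (slater : ∃ yhat : H, δ₂ < g₂ yhat ∧ δ₁ ≤ g₁ yhat)
    (ys : H) (hysK : δ₁ ≤ g₁ ys ∧ δ₂ ≤ g₂ ys)
    (hmin : ∀ w : H, δ₁ ≤ g₁ w → δ₂ ≤ g₂ w →
      (1 / 2) * a ys ys - f ys ≤ (1 / 2) * a w w - f w) :
    ∃ lam mu : ℝ, 0 ≤ lam ∧ 0 ≤ mu ∧
      (∀ w : H, a ys w = f w + lam * g₁ w + mu * g₂ w) ∧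
      lam * (g₁ ys - δ₁) = 0 ∧ mu * (g₂ ys - δ₂) = 0 := by
  -- feasibility of segments in a single (possibly slack) constraint
  have hfeas : ∀ (g : H →L[ℝ] ℝ) (δ : ℝ) (d : H), δ ≤ g ys →
      (0 ≤ g d ∨ δ < g ys) →
      ∃ ε > 0, ∀ t : ℝ, 0 < t → t ≤ ε → δ ≤ g (ys + t • d) := by
    intro g δ d hK hcase
    rcases hcase with hpos | hslack
    · exact ⟨1, one_pos, fun t ht _ => by
        rw [map_add, map_smul, smul_eq_mul]; nlinarith⟩
    · refine ⟨(g ys - δ) / (1 + |g d|),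
        div_pos (by linarith) (by positivity), fun t ht htε => ?_⟩
      rw [map_add, map_smul, smul_eq_mul]
      have hpos1 : (0:ℝ) < 1 + |g d| := by positivity
      have h2 : t * (1 + |g d|) ≤ g ys - δ := by
        rw [← le_div_iff₀ hpos1]; exact htε
      nlinarith [mul_le_mul_of_nonneg_left (neg_abs_le (g d)) ht.le,
        abs_nonneg (g d)]
  -- the directional first-order condition
  have hL : ∀ d : H, (0 ≤ g₁ d ∨ δ₁ < g₁ ys) → (0 ≤ g₂ d ∨ δ₂ < g₂ ys) →
      0 ≤ a ys d - f d := by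
    intro d hc1 hc2
    obtain ⟨ε₁, hε₁, hf1⟩ := hfeas g₁ δ₁ d hysK.1 hc1
    obtain ⟨ε₂, hε₂, hf2⟩ := hfeas g₂ δ₂ d hysK.2 hc2
    set ε : ℝ := min ε₁ ε₂ with hε
    have hεpos : 0 < ε := lt_min hε₁ hε₂
    have hkey : ∀ t : ℝ, 0 < t → t ≤ ε →
        0 ≤ t * (a ys d - f d) + t ^ 2 / 2 * a d d := by
      intro t ht htε
      have hJ := hmin (ys + t • d) (hf1 t ht (htε.trans (min_le_left _ _)))
        (hf2 t ht (htε.trans (min_le_right _ _)))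
      have hexp : a (ys + t • d) (ys + t • d)
          = a ys ys + 2 * t * a ys d + t ^ 2 * a d d := by
        simp only [map_add, map_smul, LinearMap.add_apply,
          LinearMap.smul_apply, smul_eq_mul]
        rw [hsymm d ys]
        ring
      have hfexp : f (ys + t • d) = f ys + t * f d := by
        rw [map_add, map_smul, smul_eq_mul]
      rw [hexp, hfexp] at hJ
      nlinarith
    by_contra hneg
    push_neg at hneg
    by_cases hC : a d d ≤ 0
    · have := hkey ε hεpos (le_refl ε)
      nlinarith
    · push_neg at hC
      set t : ℝ := min ε (-(a ys d - f d) / a d d) with htdef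
      have ht : 0 < t := lt_min hεpos (div_pos (by linarith) hC)
      have htε : t ≤ ε := min_le_left _ _
      have htC : t * a d d ≤ -(a ys d - f d) := by
        have := min_le_right ε (-(a ys d - f d) / a d d)
        rw [← le_div_iff₀ hC]; exact this
      have := hkey t ht htε
      nlinarith
  -- case analysis on active constraints
  by_cases ha1 : δ₁ < g₁ ys <;> by_cases ha2 : δ₂ < g₂ ys
  · -- both slack: L = 0
    refine ⟨0, 0, le_refl 0, le_refl 0, fun w => ?_, by ring, by ring⟩
    have h1 := hL w (Or.inr ha1) (Or.inr ha2)
    have h2 := hL (-w) (Or.inr ha1) (Or.inr ha2)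
    rw [map_neg, map_neg] at h2
    simp only [zero_mul]
    linarith
  · -- g₂ active, g₁ slack
    have ha2' : g₂ ys = δ₂ := le_antisymm (not_lt.mp ha2) hysK.2
    obtain ⟨mu, hmu, heq⟩ := farkas_one (a ys - (f : H →ₗ[ℝ] ℝ))
      (g₂ : H →ₗ[ℝ] ℝ) (fun d hd => by
        simpa using hL d (Or.inr ha1) (Or.inl hd))
    refine ⟨0, mu, le_refl 0, hmu, fun w => ?_, by ring, by rw [ha2']; ring⟩
    have := heq w
    simp only [LinearMap.sub_apply, ContinuousLinearMap.coe_coe] at this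
    linarith
  · -- g₁ active, g₂ slack
    have ha1' : g₁ ys = δ₁ := le_antisymm (not_lt.mp ha1) hysK.1
    obtain ⟨lam, hlam, heq⟩ := farkas_one (a ys - (f : H →ₗ[ℝ] ℝ))
      (g₁ : H →ₗ[ℝ] ℝ) (fun d hd => by
        simpa using hL d (Or.inl hd) (Or.inr ha2))
    refine ⟨lam, 0, hlam, le_refl 0, fun w => ?_, by rw [ha1']; ring, by ring⟩
    have := heq w
    simp only [LinearMap.sub_apply, ContinuousLinearMap.coe_coe] at this
    linarith
  · -- both active
    have ha1' : g₁ ys = δ₁ := le_antisymm (not_lt.mp ha1) hysK.1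
    have ha2' : g₂ ys = δ₂ := le_antisymm (not_lt.mp ha2) hysK.2
    obtain ⟨yhat, hy2, hy1⟩ := slater
    obtain ⟨lam, mu, hlam, hmu, heq⟩ := farkas_two (a ys - (f : H →ₗ[ℝ] ℝ))
      (g₁ : H →ₗ[ℝ] ℝ) (g₂ : H →ₗ[ℝ] ℝ)
      (fun d hd1 hd2 => by
        simpa using hL d (Or.inl hd1) (Or.inl hd2))
      ⟨yhat - ys, by
        constructor
        · simp only [ContinuousLinearMap.coe_coe, map_sub]; linarith
        · simp only [ContinuousLinearMap.coe_coe, map_sub]; linarith⟩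
    refine ⟨lam, mu, hlam, hmu, fun w => ?_, by rw [ha1']; ring,
      by rw [ha2']; ring⟩
    have := heq w
    simp only [LinearMap.sub_apply, ContinuousLinearMap.coe_coe] at this
    linarith
end

section
/- Let H be a real Hilbert space, let a : H × H → ℝ be a bilinear form, let f, g : H → ℝ be continuous linear functionals, let δ ∈ ℝ, let (Ω, Σ, m) be a measure space, let B : H → L²(Ω, m) be a continuous linear map, and let u_a, u_b ∈ L²(Ω, m). Set K̃ = {w ∈ H : g(w) ≥ δ and u_a ≤ B(w) ≤ u_b almost everywhere}. Suppose y* ∈ K̃, λ ∈ L²(Ω, m) and μ ∈ ℝ satisfy: (i) a(y*, w) = f(w) + ∫_Ω λ·B(w) dm + μ·g(w) for all w ∈ H; (ii) μ ≥ 0 and μ·(g(y*) − δ) = 0; (iii) λ ≥ 0 almost everywhere on {B(y*) = u_a}, λ ≤ 0 almost everywhere on {B(y*) = u_b}, and λ = 0 almost everywhere on {u_a < B(y*) < u_b}. Then y* satisfies the variational inequality a(y*, w − y*) ≥ f(w − y*) for all w ∈ K̃. -/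
open MeasureTheory

/-- Sufficiency of the generalized Karush–Kuhn–Tucker conditions for the
problem with one affine scalar constraint `g(w) ≥ δ` and bilateral pointwise
constraints `u_a ≤ B(w) ≤ u_b` (a.e.): the stationarity equation with an
`L²` multiplier `λ` and a scalar multiplier `μ ≥ 0`, together with the
complementarity/sign conditions, imply the variational inequality
`a(y*, w − y*) ≥ f(w − y*)` for all feasible `w`. -/
theorem generalized_kkt_sufficient_variational_inequality
    {H : Type*} [NormedAddCommGroup H] [InnerProductSpace ℝ H] [CompleteSpace H]
    {Ω : Type*} [MeasurableSpace Ω] (m : Measure Ω)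
    (a : H →ₗ[ℝ] H →ₗ[ℝ] ℝ)
    (f g : H →L[ℝ] ℝ) (δ : ℝ)
    (B : H →L[ℝ] Lp ℝ 2 m) (ua ub : Lp ℝ 2 m)
    (ys : H)
    (hys_g : δ ≤ g ys) (hys_a : ua ≤ B ys) (hys_b : B ys ≤ ub)
    (lam : Lp ℝ 2 m) (mu : ℝ)
    (hkkt : ∀ w : H, a ys w = f w + (∫ x, lam x * (B w) x ∂m) + mu * g w)
    (hmu : 0 ≤ mu) (hcomp : mu * (g ys - δ) = 0)
    (hlam_a : ∀ᵐ x ∂m, (B ys) x = ua x → 0 ≤ lam x)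
    (hlam_b : ∀ᵐ x ∂m, (B ys) x = ub x → lam x ≤ 0)
    (hlam_0 : ∀ᵐ x ∂m, (ua x < (B ys) x ∧ (B ys) x < ub x) → lam x = 0) :
    ∀ w ∈ {w : H | δ ≤ g w ∧ ua ≤ B w ∧ B w ≤ ub},
      f (w - ys) ≤ a ys (w - ys) := by

  intro w hw
  obtain ⟨hg, ha, hb⟩ := hw
  have key := hkkt (w - ys)
  have hmu' : 0 ≤ mu * g (w - ys) := by
    have := mul_nonneg hmu (sub_nonneg.2 hg)
    simp only [map_sub]
    nlinarith
  have hint : 0 ≤ ∫ x, lam x * (B (w - ys)) x ∂m := by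
    apply integral_nonneg_of_ae
    have hBsub : (B (w - ys) : Ω → ℝ) =ᵐ[m] fun x => (B w) x - (B ys) x := by
      rw [map_sub]; exact Lp.coeFn_sub _ _
    have ha' : (ua : Ω → ℝ) ≤ᵐ[m] (B w : Ω → ℝ) := (Lp.coeFn_le _ _).2 ha
    have hb' : ((B w : Lp ℝ 2 m) : Ω → ℝ) ≤ᵐ[m] (ub : Ω → ℝ) := (Lp.coeFn_le _ _).2 hb
    have ha2 : (ua : Ω → ℝ) ≤ᵐ[m] (B ys : Ω → ℝ) := (Lp.coeFn_le _ _).2 hys_a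
    have hb2 : ((B ys : Lp ℝ 2 m) : Ω → ℝ) ≤ᵐ[m] (ub : Ω → ℝ) := (Lp.coeFn_le _ _).2 hys_b
    filter_upwards [hBsub, ha', hb', ha2, hb2, hlam_a, hlam_b, hlam_0] with x heq h1 h2 h3 h4 la lb l0
    simp only [Pi.zero_apply]
    rw [heq]
    by_cases hA : (B ys) x = ua x
    · exact mul_nonneg (la hA) (by linarith [h1])
    · by_cases hB : (B ys) x = ub x
      · have := lb hB
        nlinarith [h2]
      · have : lam x = 0 := l0 ⟨lt_of_le_of_ne h3 (Ne.symm hA), lt_of_le_of_ne h4 hB⟩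
        simp [this]
  linarith
end
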